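/- In an SGF-quantale, if d(f) ≰ p and d(g) ≰ f[p] (p prime), then d(f·g) ≰ p and (f·g)[p] = g[f[p]]. -/
import Mathlib


/-- A unital involutive quantale. The multiplicative unit `1` plays the role of `e`. -/
class UIQuantale (Q : Type*) extends CompleteLattice Q, Monoid Q, StarMul Q where
  mul_sSup : ∀ (a : Q) (s : Set Q), a * sSup s = ⨆ b ∈ s, a * b
  sSup_mul : ∀ (a : Q) (s : Set Q), sSup s * a = ⨆ b ∈ s, b * a
  star_sSup : ∀ (s : Set Q), star (sSup s) = ⨆ b ∈ s, star b

/-- A partial unit: both `f` and `star f` are functional. -/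
def IsPU {Q : Type*} [UIQuantale Q] (f : Q) : Prop :=
  star f * f ≤ 1 ∧ f * star f ≤ 1

/-- A prime element of `Q_e`. -/
def IsPrimeE {Q : Type*} [UIQuantale Q] (p : Q) : Prop :=
  p ≤ 1 ∧ p ≠ 1 ∧ ∀ h k : Q, h ≤ 1 → k ≤ 1 → h ⊓ k ≤ p → h ≤ p ∨ k ≤ p

/-- An SGF-quantale: a unital involutive quantale which is join-generated by its
partial units (SGF1), satisfies `f = f f* f` for partial units (SGF2), and the
separation axiom SGF3. -/
class SGFQuantale (Q : Type*) extends UIQuantale Q where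
  sgf1 : ∀ a : Q, a = sSup {f | IsPU f ∧ f ≤ a}
  sgf2 : ∀ f : Q, IsPU f → f * star f * f = f
  sgf3 : ∀ f g h : Q, IsPU f → IsPU g → h ≤ 1 → f ≤ h * ⊤ ⊔ g → f ≤ h * f ⊔ g

/-- The incidence relation: `f` and `g` are incident at `p` if some `h ≤ d(f) ⊓ d(g)`
with `h ≰ p` satisfies `h f ≤ p f ⊔ g`. -/
def Incident {Q : Type*} [SGFQuantale Q] (p f g : Q) : Prop :=
  ∃ h : Q, h ≤ (f * star f) ⊓ (g * star g) ∧ ¬ h ≤ p ∧ h * f ≤ p * f ⊔ g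

section helpers
variable {Q : Type*} [UIQuantale Q]

lemma qmul_mono_left {a b : Q} (c : Q) (h : a ≤ b) : c * a ≤ c * b := by
  have h1 : c * sSup {a, b} = ⨆ x ∈ ({a, b} : Set Q), c * x := UIQuantale.mul_sSup c {a, b}
  have hs : sSup ({a, b} : Set Q) = b := by rw [sSup_pair, sup_eq_right.mpr h]
  have h2 : c * a ≤ ⨆ x ∈ ({a, b} : Set Q), c * x := le_biSup _ (Set.mem_insert _ _)
  rwa [← h1, hs] at h2

lemma qmul_mono_right {a b : Q} (c : Q) (h : a ≤ b) : a * c ≤ b * c := by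
  have h1 : sSup {a, b} * c = ⨆ x ∈ ({a, b} : Set Q), x * c := UIQuantale.sSup_mul c {a, b}
  have hs : sSup ({a, b} : Set Q) = b := by rw [sSup_pair, sup_eq_right.mpr h]
  have h2 : a * c ≤ ⨆ x ∈ ({a, b} : Set Q), x * c := le_biSup (fun x => x * c) (Set.mem_insert _ _)
  rwa [← h1, hs] at h2

lemma qmul_mono {a b c d : Q} (h1 : a ≤ b) (h2 : c ≤ d) : a * c ≤ b * d :=
  le_trans (qmul_mono_right c h1) (qmul_mono_left b h2)

lemma qstar_mono {a b : Q} (h : a ≤ b) : star a ≤ star b := by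
  have h1 : star (sSup {a, b}) = ⨆ x ∈ ({a, b} : Set Q), star x := UIQuantale.star_sSup {a, b}
  have hs : sSup ({a, b} : Set Q) = b := by rw [sSup_pair, sup_eq_right.mpr h]
  have h2 : star a ≤ ⨆ x ∈ ({a, b} : Set Q), star x := le_biSup _ (Set.mem_insert _ _)
  rwa [← h1, hs] at h2

end helpers

section sgf
variable {Q : Type*} [SGFQuantale Q]

lemma pu_star_eq {f : Q} (hf : IsPU f) (h1 : f ≤ 1) : star f = f := by
  have hle : f ≤ star f := by
    calc f = f * star f * f := (SGFQuantale.sgf2 f hf).symm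
    _ ≤ 1 * star f * 1 := qmul_mono (qmul_mono h1 le_rfl) h1
    _ = star f := by simp
  have := qstar_mono hle
  rw [star_star] at this
  exact le_antisymm this hle

lemma star_eq_of_le_one {a : Q} (ha : a ≤ 1) : star a = a := by
  have h1 : star a ≤ a := by
    conv_lhs => rw [SGFQuantale.sgf1 a]
    rw [UIQuantale.star_sSup]
    apply iSup₂_le
    rintro f ⟨hfpu, hfle⟩
    rw [pu_star_eq hfpu (le_trans hfle ha)]
    exact hfle
  have h2 := qstar_mono h1
  rw [star_star] at h2
  exact le_antisymm h1 h2

lemma inf_le_mul_of_le_one {a b : Q} (ha : a ≤ 1) (hb : b ≤ 1) : a ⊓ b ≤ a * b := by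
  conv_lhs => rw [SGFQuantale.sgf1 (a ⊓ b)]
  apply sSup_le
  rintro x ⟨hxpu, hxle⟩
  have hx1 : x ≤ 1 := le_trans hxle (le_trans inf_le_left ha)
  have e := SGFQuantale.sgf2 x hxpu
  rw [pu_star_eq hxpu hx1] at e
  have key : x ≤ x * x := by
    conv_lhs => rw [← e]
    exact (qmul_mono_left (x * x) hx1).trans (le_of_eq (mul_one _))
  exact key.trans (qmul_mono (le_trans hxle inf_le_left) (le_trans hxle inf_le_right))

lemma inf_le_sandwich {h k : Q} (hh : h ≤ 1) (hk : k ≤ 1) : h ⊓ k ≤ h * k * h := by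
  have h1 : h ⊓ k ≤ (h ⊓ k) * h := by
    have := inf_le_mul_of_le_one (a := h ⊓ k) (b := h) (le_trans inf_le_left hh) hh
    simpa [inf_assoc, inf_of_le_left (inf_le_left : h ⊓ k ≤ h)] using this
  exact h1.trans (qmul_mono_right h (inf_le_mul_of_le_one hh hk))

end sgf

/-- If `d(f) ≰ p` and `d(g) ≰ f[p]`, then `d(f g) ≰ p` and `(f g)[p] = g[f[p]]`:
with `q = f[p]` and `q' = g[q]`, the prime `q'` satisfies the defining property of
`(f g)[p]`. -/
theorem stmt15 (Q : Type*) [SGFQuantale Q] (p f g q q' : Q)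
    (hp : IsPrimeE p) (hf : IsPU f) (hg : IsPU g)
    (hdf : ¬ f * star f ≤ p)
    (hq : IsPrimeE q) (hrf : ¬ star f * f ≤ q) (hpq : p * f = f * q)
    (hdg : ¬ g * star g ≤ q)
    (hq' : IsPrimeE q') (hrg : ¬ star g * g ≤ q') (hqq' : q * g = g * q') :
    ¬ (f * g) * star (f * g) ≤ p ∧
    (¬ star (f * g) * (f * g) ≤ q' ∧ p * (f * g) = (f * g) * q') := by
  have hsq : star q = q := star_eq_of_le_one hq.1
  have hsq' : star q' = q' := star_eq_of_le_one hq'.1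
  refine ⟨?_, ?_, ?_⟩
  · intro hcon
    have step1 : star f * ((f * g) * star (f * g)) * f ≤ star f * p * f :=
      qmul_mono_right f (qmul_mono_left (star f) hcon)
    have e1 : star f * ((f * g) * star (f * g)) * f
        = (star f * f) * (g * star g) * (star f * f) := by
      simp only [star_mul, mul_assoc]
    have e2 : star f * p * f = (star f * f) * q := by
      rw [mul_assoc, hpq, ← mul_assoc]
    have step2 : (star f * f) * (g * star g) * (star f * f) ≤ q := by
      rw [← e1]
      refine step1.trans ?_
      rw [e2]
      exact (qmul_mono_right q hf.1).trans (le_of_eq (one_mul q))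
    have step3 : (star f * f) ⊓ (g * star g) ≤ q :=
      (inf_le_sandwich hf.1 hg.2).trans step2
    rcases hq.2.2 _ _ hf.1 hg.2 step3 with h | h
    · exact hrf h
    · exact hdg h
  · intro hcon
    have step1 : g * (star (f * g) * (f * g)) * star g ≤ g * q' * star g :=
      qmul_mono_right (star g) (qmul_mono_left g hcon)
    have e1 : g * (star (f * g) * (f * g)) * star g
        = (g * star g) * (star f * f) * (g * star g) := by
      simp only [star_mul, mul_assoc]
    have hsw : star g * q = q' * star g := by
      have h2 := congrArg star hqq'
      rw [star_mul, star_mul, hsq, hsq'] at h2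
      exact h2
    have e2 : g * q' * star g = (g * star g) * q := by
      rw [mul_assoc, ← hsw, ← mul_assoc]
    have step2 : (g * star g) * (star f * f) * (g * star g) ≤ q := by
      rw [← e1]
      refine step1.trans ?_
      rw [e2]
      exact (qmul_mono_right q hg.2).trans (le_of_eq (one_mul q))
    have step3 : (g * star g) ⊓ (star f * f) ≤ q :=
      (inf_le_sandwich hg.2 hf.1).trans step2
    rcases hq.2.2 _ _ hg.2 hf.1 step3 with h | h
    · exact hdg h
    · exact hrf h
  · rw [← mul_assoc, hpq, mul_assoc, hqq', ← mul_assoc]
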